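/- arXiv:2110.03910 — 3 statements merged into one kernel-verified Lean document; each statement's English description precedes it below -/
import Mathlib

section
/- Let {ψₙ}, {δₙ}, {αₙ} be sequences in [0,∞) with ψₙ₊₁ ≤ ψₙ + αₙ(ψₙ - ψₙ₋₁) + δₙ for all n ≥ 1, ∑ δₙ < ∞, and 0 ≤ αₙ ≤ α < 1 for some α and all n. Then ∑ₙ max(ψₙ - ψₙ₋₁, 0) < ∞ and limₙ ψₙ exists in [0,∞). -/
/-!
Put `θ n = [ψ (n+1) - ψ n]₊`. Since `0 ≤ aₙ ≤ α`, the recursion gives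
`θ (n+1) ≤ α θ n + δ (n+1)`, and summing this yields `(1 - α) ∑_{i<n} θ i ≤ θ 0 + ∑ δ`, so `θ` is
summable. Then `ψ n - ∑_{i<n} θ i` is antitone and bounded below by `-∑ θ`, hence convergent, and
so is `ψ`.
-/

open Filter Topology Finset

lemma summable_of_succ_le_mul_add {θ ε : ℕ → ℝ} {α : ℝ} (hθ : ∀ n, 0 ≤ θ n) (hε : ∀ n, 0 ≤ ε n)
    (hεs : Summable ε) (hα : α < 1) (h : ∀ n, θ (n + 1) ≤ α * θ n + ε n) : Summable θ := by
  refine summable_of_sum_range_le hθ (c := (θ 0 + ∑' n, ε n) / (1 - α)) fun n => ?_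
  have hε_le : ∑ i ∈ range n, ε i ≤ ∑' n, ε n := hεs.sum_le_tsum _ fun i _ => hε i
  have hstep : ∑ i ∈ range (n + 1), θ i ≤ θ 0 + α * ∑ i ∈ range n, θ i + ∑ i ∈ range n, ε i := by
    rw [sum_range_succ', mul_sum, add_comm (θ 0), add_assoc, add_comm (θ 0), ← add_assoc,
      ← sum_add_distrib]
    gcongr with i
    exact h i
  have hmono : ∑ i ∈ range n, θ i ≤ ∑ i ∈ range (n + 1), θ i := by
    rw [sum_range_succ]
    linarith [hθ n]
  rw [le_div_iff₀ (by linarith)]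
  linarith

lemma max_zero_le_mul_max_zero_add {a α x y d : ℝ} (ha : 0 ≤ a) (haα : a ≤ α) (hd : 0 ≤ d)
    (h : y ≤ a * x + d) : max y 0 ≤ α * max x 0 + d := by
  have hax : a * x ≤ α * max x 0 :=
    calc a * x ≤ a * max x 0 := mul_le_mul_of_nonneg_left (le_max_left x 0) ha
      _ ≤ α * max x 0 := mul_le_mul_of_nonneg_right haα (le_max_right x 0)
  exact max_le (by linarith) (add_nonneg (mul_nonneg (ha.trans haα) (le_max_right x 0)) hd)

lemma exists_tendsto_of_summable_max_sub_zero {ψ : ℕ → ℝ} (hψ : BddBelow (Set.range ψ))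
    (hθ : Summable fun n => max (ψ (n + 1) - ψ n) 0) : ∃ l, Tendsto ψ atTop (𝓝 l) := by
  set θ : ℕ → ℝ := fun n => max (ψ (n + 1) - ψ n) 0
  obtain ⟨m, hm⟩ := hψ
  have hθ_le : ∀ n, ∑ i ∈ range n, θ i ≤ ∑' i, θ i :=
    fun n => hθ.sum_le_tsum _ fun i _ => le_max_right _ _
  set v : ℕ → ℝ := fun n => ψ n - ∑ i ∈ range n, θ i
  have hv_anti : Antitone v := antitone_nat_of_succ_le fun n => by
    simp only [v, sum_range_succ]
    linarith [le_max_left (ψ (n + 1) - ψ n) 0]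
  have hv_bdd : BddBelow (Set.range v) := ⟨m - ∑' i, θ i, by
    rintro _ ⟨n, rfl⟩
    linarith [hm ⟨n, rfl⟩, hθ_le n]⟩
  refine ⟨(⨅ n, v n) + ∑' i, θ i, ?_⟩
  have hlim := (tendsto_atTop_ciInf hv_anti hv_bdd).add hθ.hasSum.tendsto_sum_nat
  simpa [v] using hlim

theorem inertial_sequence_lemma
    (ψ δ a : ℕ → ℝ) (α : ℝ)
    (hψ : ∀ n, 0 ≤ ψ n) (hδ : ∀ n, 0 ≤ δ n)
    (hrec : ∀ n ≥ 1, ψ (n + 1) ≤ ψ n + a n * (ψ n - ψ (n - 1)) + δ n)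
    (hsum : Summable δ)
    (ha : ∀ n, 0 ≤ a n ∧ a n ≤ α) (hα : α < 1) :
    Summable (fun n => max (ψ (n + 1) - ψ n) 0) ∧
      ∃ ψstar : ℝ, 0 ≤ ψstar ∧ Filter.Tendsto ψ Filter.atTop (nhds ψstar) := by
  have hθ_step : ∀ n, max (ψ (n + 2) - ψ (n + 1)) 0 ≤
      α * max (ψ (n + 1) - ψ n) 0 + δ (n + 1) := fun n =>
    max_zero_le_mul_max_zero_add (ha (n + 1)).1 (ha (n + 1)).2 (hδ (n + 1)) (by
      have := hrec (n + 1) (by omega)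
      simp only [Nat.add_sub_cancel] at this
      linarith)
  have hθ : Summable fun n => max (ψ (n + 1) - ψ n) 0 :=
    summable_of_succ_le_mul_add (fun n => le_max_right _ _) (fun n => hδ (n + 1))
      ((summable_nat_add_iff 1).mpr hsum) hα hθ_step
  obtain ⟨l, hl⟩ := exists_tendsto_of_summable_max_sub_zero ⟨0, by rintro _ ⟨n, rfl⟩; exact hψ n⟩ hθ
  exact ⟨hθ, l, ge_of_tendsto' hl hψ, hl⟩
end

section
/- Let H be a real Hilbert space, C ⊆ H nonempty closed convex, and S : C → H nonexpansive. If {xₙ} ⊆ C converges weakly to x ∈ H and ‖S xₙ - xₙ‖ → 0, then x ∈ C and S x = x. -/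
/-!
A closed convex set is weakly closed, so `p ∈ C`. Put `q = p - S p`. Expanding
`‖xₙ - S p‖² = ‖xₙ - p‖² + 2⟪xₙ - p, q⟫ + ‖q‖²` and using
`‖xₙ - S p‖ ≤ ‖xₙ - S xₙ‖ + ‖xₙ - p‖` (nonexpansiveness) bounds `‖q‖²` by
`εₙ² + 2 εₙ ‖xₙ - p‖ - 2⟪xₙ - p, q⟫` with `εₙ = ‖S xₙ - xₙ‖`. Since weakly convergent sequences
are bounded (uniform boundedness), this bound tends to `0`, hence `q = 0`.
-/

open Filter Topology
open scoped InnerProductSpace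

section WeakConvergence

variable {H : Type*} [NormedAddCommGroup H] [InnerProductSpace ℝ H] [CompleteSpace H]
  {x : ℕ → H} {p : H}

theorem tendsto_continuousLinearMap_of_tendsto_inner
    (hweak : ∀ z : H, Tendsto (fun n => ⟪x n, z⟫_ℝ) atTop (𝓝 ⟪p, z⟫_ℝ)) (f : H →L[ℝ] ℝ) :
    Tendsto (fun n => f (x n)) atTop (𝓝 (f p)) := by
  obtain ⟨y, rfl⟩ := (InnerProductSpace.toDual ℝ H).surjective f
  simpa [InnerProductSpace.toDual_apply_apply, real_inner_comm] using hweak y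

theorem IsClosed.mem_of_tendsto_inner {C : Set H} (hclosed : IsClosed C) (hconv : Convex ℝ C)
    (hxC : ∀ n, x n ∈ C) (hweak : ∀ z : H, Tendsto (fun n => ⟪x n, z⟫_ℝ) atTop (𝓝 ⟪p, z⟫_ℝ)) :
    p ∈ C := by
  by_contra hp
  obtain ⟨f, u, hfC, hup⟩ := geometric_hahn_banach_closed_point hconv hclosed hp
  have hfp : f p ≤ u :=
    le_of_tendsto (tendsto_continuousLinearMap_of_tendsto_inner hweak f)
      (Eventually.of_forall fun n => (hfC _ (hxC n)).le)
  linarith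

theorem exists_norm_le_of_tendsto_inner
    (hweak : ∀ z : H, Tendsto (fun n => ⟪x n, z⟫_ℝ) atTop (𝓝 ⟪p, z⟫_ℝ)) :
    ∃ M, ∀ n, ‖x n‖ ≤ M := by
  obtain ⟨M, hM⟩ := banach_steinhaus (g := fun n => innerSL ℝ (x n)) fun z => by
    obtain ⟨b, hb⟩ := (hweak z).norm.bddAbove_range
    exact ⟨b, fun n => hb (Set.mem_range_self n)⟩
  exact ⟨M, fun n => by simpa [innerSL_apply_norm] using hM n⟩

end WeakConvergence

theorem sq_norm_sub_apply_le {H : Type*} [NormedAddCommGroup H] [InnerProductSpace ℝ H]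
    {S : H → H} {y p : H} (hS : ‖S y - S p‖ ≤ ‖y - p‖) :
    ‖p - S p‖ ^ 2 ≤ ‖S y - y‖ ^ 2 + 2 * ‖S y - y‖ * ‖y - p‖ - 2 * ⟪y - p, p - S p⟫_ℝ := by
  have htri : ‖y - S p‖ ≤ ‖S y - y‖ + ‖y - p‖ :=
    calc ‖y - S p‖ ≤ ‖y - S y‖ + ‖S y - S p‖ := norm_sub_le_norm_sub_add_norm_sub _ _ _
      _ ≤ ‖S y - y‖ + ‖y - p‖ := by rw [norm_sub_rev y]; gcongr
  have hexpand : ‖y - S p‖ ^ 2 = ‖y - p‖ ^ 2 + 2 * ⟪y - p, p - S p⟫_ℝ + ‖p - S p‖ ^ 2 := by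
    rw [← norm_add_sq_real, sub_add_sub_cancel]
  have hsq : ‖y - S p‖ ^ 2 ≤ (‖S y - y‖ + ‖y - p‖) ^ 2 := by gcongr
  nlinarith

theorem demiclosedness_principle_general
    {H : Type*} [NormedAddCommGroup H] [InnerProductSpace ℝ H] [CompleteSpace H]
    (C : Set H) (hclosed : IsClosed C) (hconv : Convex ℝ C)
    (S : H → H) (hS : ∀ x ∈ C, ∀ y ∈ C, ‖S x - S y‖ ≤ ‖x - y‖)
    (x : ℕ → H) (hxC : ∀ n, x n ∈ C) (p : H)
    (hweak : ∀ z : H, Filter.Tendsto (fun n => (inner ℝ (x n) z : ℝ)) Filter.atTop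
      (nhds (inner ℝ p z)))
    (hfix : Filter.Tendsto (fun n => ‖S (x n) - x n‖) Filter.atTop (nhds 0)) :
    p ∈ C ∧ S p = p := by
  have hpC : p ∈ C := hclosed.mem_of_tendsto_inner hconv hxC hweak
  obtain ⟨M, hM⟩ := exists_norm_le_of_tendsto_inner hweak
  have hbdd : IsBoundedUnder (· ≤ ·) atTop fun n => ‖‖x n - p‖‖ :=
    isBoundedUnder_of ⟨M + ‖p‖, fun n => by
      rw [norm_norm]; exact (norm_sub_le _ _).trans (by linarith [hM n])⟩
  have hinner : Tendsto (fun n => ⟪x n - p, p - S p⟫_ℝ) atTop (𝓝 0) := by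
    simpa [inner_sub_left] using (hweak (p - S p)).sub_const ⟪p, p - S p⟫_ℝ
  have hbound : Tendsto (fun n => ‖S (x n) - x n‖ ^ 2 + 2 * ‖S (x n) - x n‖ * ‖x n - p‖
      - 2 * ⟪x n - p, p - S p⟫_ℝ) atTop (𝓝 0) := by
    simpa [mul_assoc] using ((hfix.pow 2).add
      ((hfix.zero_mul_isBoundedUnder_le hbdd).const_mul 2)).sub (hinner.const_mul 2)
  have hq : ‖p - S p‖ ^ 2 ≤ 0 := ge_of_tendsto hbound
    (Eventually.of_forall fun n => sq_norm_sub_apply_le (hS _ (hxC n) p hpC))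
  refine ⟨hpC, (sub_eq_zero.mp (norm_eq_zero.mp ?_)).symm⟩
  exact pow_eq_zero_iff two_ne_zero |>.mp (le_antisymm hq (by positivity))

theorem demiclosedness_principle
    {H : Type*} [NormedAddCommGroup H] [InnerProductSpace ℝ H] [CompleteSpace H]
    (C : Set H) (hne : C.Nonempty) (hclosed : IsClosed C) (hconv : Convex ℝ C)
    (S : H → H) (hS : ∀ x ∈ C, ∀ y ∈ C, ‖S x - S y‖ ≤ ‖x - y‖)
    (x : ℕ → H) (hxC : ∀ n, x n ∈ C) (p : H)
    (hweak : ∀ z : H, Filter.Tendsto (fun n => (inner ℝ (x n) z : ℝ)) Filter.atTop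
      (nhds (inner ℝ p z)))
    (hfix : Filter.Tendsto (fun n => ‖S (x n) - x n‖) Filter.atTop (nhds 0)) :
    p ∈ C ∧ S p = p :=
  demiclosedness_principle_general C hclosed hconv S hS x hxC p hweak hfix
end

section
/- Let H be a real Hilbert space, S, J' : H → H nonexpansive with common fixed point x*, and the inertial modified S-iteration xₙ₊₁ = (1-αₙ)S yₙ + αₙ J' yₙ, yₙ = (1-βₙ)wₙ + βₙ S wₙ, wₙ = xₙ + θₙ(xₙ - xₙ₋₁), with ∑θₙ < ∞, θₙ ∈ [0,θ] ⊂ [0,1), αₙ, βₙ ∈ [δ, 1-δ] for some δ ∈ (0,1/2), and {xₙ} bounded. Then limₙ ‖xₙ - x*‖ exists. -/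
/-!
Each of the two averaging steps of the iteration is a convex combination of points no farther from
the common fixed point `xstar` than its input, so it does not increase the distance to `xstar`;
only the inertial extrapolation can, and by at most `θ n * ‖x n - x (n - 1)‖ ≤ 2 M θ n`.
Hence `‖x n - xstar‖` decreases up to a summable perturbation, and such a sequence converges.
-/

open Filter Topology Finset

theorem exists_tendsto_of_le_add_summable {f ε : ℕ → ℝ} (hf : BddBelow (Set.range f))
    (hε : Summable ε) (hstep : ∀ n, f (n + 1) ≤ f n + ε n) :
    ∃ c, Tendsto f atTop (𝓝 c) := by
  set s : ℕ → ℝ := fun n => ∑ k ∈ range n, ε k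
  have hs : Tendsto s atTop (𝓝 (∑' k, ε k)) := hε.hasSum.tendsto_sum_nat
  have hanti : Antitone (f - s) := antitone_nat_of_succ_le fun n => by
    simp only [Pi.sub_apply, s, sum_range_succ]
    linarith [hstep n]
  have hbdd : BddBelow (Set.range (f - s)) := by
    obtain ⟨m, hm⟩ := hf
    obtain ⟨B, hB⟩ := hs.bddAbove_range
    refine ⟨m - B, ?_⟩
    rintro _ ⟨n, rfl⟩
    linarith [hm ⟨n, rfl⟩, hB ⟨n, rfl⟩, show (f - s) n = f n - s n from rfl]
  exact ⟨_, ((tendsto_atTop_ciInf hanti hbdd).add hs).congr fun n => sub_add_cancel (f n) (s n)⟩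

section NormedSpace

variable {E : Type*} [SeminormedAddCommGroup E]

theorem norm_sub_le_of_nonexpansive_of_fixed {T : E → E}
    (hT : ∀ u v, ‖T u - T v‖ ≤ ‖u - v‖) {z : E} (hz : T z = z) (u : E) :
    ‖T u - z‖ ≤ ‖u - z‖ := by
  simpa only [hz] using hT u z

variable [NormedSpace ℝ E]

theorem norm_combo_sub_le {u v z : E} {c r : ℝ} (hc : c ∈ Set.Icc (0 : ℝ) 1)
    (hu : ‖u - z‖ ≤ r) (hv : ‖v - z‖ ≤ r) :
    ‖(1 - c) • u + c • v - z‖ ≤ r := by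
  have h := convex_closedBall z r (x := u) (y := v) (by rwa [mem_closedBall_iff_norm])
    (by rwa [mem_closedBall_iff_norm]) (sub_nonneg.2 hc.2) hc.1 (sub_add_cancel 1 c)
  rwa [mem_closedBall_iff_norm] at h

theorem norm_add_smul_sub_le {u d z : E} {t : ℝ} (ht : 0 ≤ t) :
    ‖u + t • d - z‖ ≤ ‖u - z‖ + t * ‖d‖ := by
  calc ‖u + t • d - z‖ = ‖(u - z) + t • d‖ := by rw [add_sub_right_comm]
    _ ≤ ‖u - z‖ + ‖t • d‖ := norm_add_le _ _
    _ = ‖u - z‖ + t * ‖d‖ := by rw [norm_smul, Real.norm_of_nonneg ht]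

end NormedSpace

theorem limit_of_distance_exists_general
    {H : Type*} [NormedAddCommGroup H] [InnerProductSpace ℝ H]
    (S J : H → H)
    (hS : ∀ x y : H, ‖S x - S y‖ ≤ ‖x - y‖)
    (hJ : ∀ x y : H, ‖J x - J y‖ ≤ ‖x - y‖)
    (xstar : H) (hSx : S xstar = xstar) (hJx : J xstar = xstar)
    (x w y : ℕ → H) (θ a b : ℕ → ℝ) (θbar δ : ℝ)
    (hθsum : Summable θ) (hθ : ∀ n, θ n ∈ Set.Icc 0 θbar)
    (hδ : δ ∈ Set.Ioo (0 : ℝ) (1 / 2))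
    (ha : ∀ n, a n ∈ Set.Icc δ (1 - δ)) (hb : ∀ n, b n ∈ Set.Icc δ (1 - δ))
    (hw : ∀ n, w n = x n + θ n • (x n - x (n - 1)))
    (hy : ∀ n, y n = (1 - b n) • w n + b n • S (w n))
    (hx : ∀ n, x (n + 1) = (1 - a n) • S (y n) + a n • J (y n))
    (hbdd : ∃ M : ℝ, ∀ n, ‖x n‖ ≤ M) :
    ∃ c : ℝ, Filter.Tendsto (fun n => ‖x n - xstar‖) Filter.atTop (nhds c) := by
  obtain ⟨M, hM⟩ := hbdd
  have hunit : ∀ {c}, c ∈ Set.Icc δ (1 - δ) → c ∈ Set.Icc (0 : ℝ) 1 := fun hc =>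
    ⟨hδ.1.le.trans hc.1, hc.2.trans (by linarith [hδ.1])⟩
  have hSz := norm_sub_le_of_nonexpansive_of_fixed hS hSx
  have hJz := norm_sub_le_of_nonexpansive_of_fixed hJ hJx
  refine exists_tendsto_of_le_add_summable ⟨0, by rintro _ ⟨n, rfl⟩; exact norm_nonneg _⟩
    (hθsum.mul_right (2 * M)) fun n => ?_
  calc ‖x (n + 1) - xstar‖ ≤ ‖y n - xstar‖ := by
        rw [hx n]; exact norm_combo_sub_le (hunit (ha n)) (hSz _) (hJz _)
    _ ≤ ‖w n - xstar‖ := by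
        rw [hy n]; exact norm_combo_sub_le (hunit (hb n)) le_rfl (hSz _)
    _ ≤ ‖x n - xstar‖ + θ n * ‖x n - x (n - 1)‖ := by
        rw [hw n]; exact norm_add_smul_sub_le (hθ n).1
    _ ≤ ‖x n - xstar‖ + θ n * (2 * M) := by
        gcongr
        · exact (hθ n).1
        · linarith [norm_sub_le (x n) (x (n - 1)), hM n, hM (n - 1)]

theorem limit_of_distance_exists
    {H : Type*} [NormedAddCommGroup H] [InnerProductSpace ℝ H] [CompleteSpace H]
    (S J : H → H)
    (hS : ∀ x y : H, ‖S x - S y‖ ≤ ‖x - y‖)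
    (hJ : ∀ x y : H, ‖J x - J y‖ ≤ ‖x - y‖)
    (xstar : H) (hSx : S xstar = xstar) (hJx : J xstar = xstar)
    (x w y : ℕ → H) (θ a b : ℕ → ℝ) (θbar δ : ℝ)
    (hθsum : Summable θ) (hθ : ∀ n, θ n ∈ Set.Icc 0 θbar) (hθbar : θbar < 1)
    (hδ : δ ∈ Set.Ioo (0 : ℝ) (1 / 2))
    (ha : ∀ n, a n ∈ Set.Icc δ (1 - δ)) (hb : ∀ n, b n ∈ Set.Icc δ (1 - δ))
    (hw : ∀ n, w n = x n + θ n • (x n - x (n - 1)))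
    (hy : ∀ n, y n = (1 - b n) • w n + b n • S (w n))
    (hx : ∀ n, x (n + 1) = (1 - a n) • S (y n) + a n • J (y n))
    (hbdd : ∃ M : ℝ, ∀ n, ‖x n‖ ≤ M) :
    ∃ c : ℝ, Filter.Tendsto (fun n => ‖x n - xstar‖) Filter.atTop (nhds c) :=
  limit_of_distance_exists_general S J hS hJ xstar hSx hJx x w y θ a b θbar δ hθsum hθ hδ ha hb hw
    hy hx hbdd
end
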